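/- arXiv:1112.6258 — 7 statements merged into one kernel-verified Lean document; each statement's English description precedes it below -/
import Mathlib

section
/- Let A be an associative unital algebra, R an invertible scalar matrix acting on the square of a free module, and L a matrix with entries in A satisfying the reflection equation R L₁ R L₁ = L₁ R L₁ R, where L₁ = L ⊗ I. If K is defined by L = ħ·1·I − (q − q⁻¹)·K with q − q⁻¹ invertible, then K satisfies the modified reflection equation R K₁ R K₁ − K₁ R K₁ R = ħ (R K₁ − K₁ R). -/
open Matrix
open scoped Kronecker

private lemma my_sub_kronecker {α : Type*} [Ring α] {l m n p : Type*}
    (A B : Matrix l m α) (C : Matrix n p α) :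
    (A - B) ⊗ₖ C = A ⊗ₖ C - B ⊗ₖ C := by
  ext ⟨i, k⟩ ⟨j, l⟩
  simp [kroneckerMap_apply, sub_mul]

/-- If `L` satisfies the reflection equation `R L₁ R L₁ = L₁ R L₁ R` for a Hecke symmetry `R`
and `K` is defined by `L = hb·1 − (q − q⁻¹)·K`, then `K` satisfies the modified reflection
equation `R K₁ R K₁ − K₁ R K₁ R = hb (R K₁ − K₁ R)`. -/
theorem modified_reflection_equation {K : Type*} [Field K] {A : Type*} [Ring A] [Algebra K A]
    {n : ℕ} (q hb : K) (hq : q ≠ 0) (hc : q - q⁻¹ ≠ 0)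
    (R : Matrix (Fin n × Fin n) (Fin n × Fin n) K) (hRinv : IsUnit R)
    (hHecke : (R - q • 1) * (R + q⁻¹ • 1) = 0)
    (L Kmat : Matrix (Fin n) (Fin n) A)
    (hLK : L = hb • (1 : Matrix (Fin n) (Fin n) A) - (q - q⁻¹) • Kmat)
    (hRE : letI R₁ := R.map (algebraMap K A)
           letI L₁ := L ⊗ₖ (1 : Matrix (Fin n) (Fin n) A)
           R₁ * L₁ * R₁ * L₁ = L₁ * R₁ * L₁ * R₁) :
    letI R₁ := R.map (algebraMap K A)
    letI K₁ := Kmat ⊗ₖ (1 : Matrix (Fin n) (Fin n) A)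
    R₁ * K₁ * R₁ * K₁ - K₁ * R₁ * K₁ * R₁ = hb • (R₁ * K₁ - K₁ * R₁) := by
  set R₁ := R.map (algebraMap K A) with hR₁def
  set K₁ := Kmat ⊗ₖ (1 : Matrix (Fin n) (Fin n) A) with hK₁def
  set c := q - q⁻¹ with hcdef
  -- Hecke relation over K
  have hsqK : R * R = c • R + 1 := by
    have h := hHecke
    simp only [sub_mul, mul_add, smul_mul_assoc, mul_smul_comm, smul_smul, mul_one,
      one_mul, smul_sub, inv_mul_cancel₀ hq, one_smul] at h
    linear_combination (norm := module) h
  -- transfer to A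
  have hsq : R₁ * R₁ = c • R₁ + 1 := by
    have : (R * R).map (algebraMap K A) = ((c • R + 1 : Matrix _ _ K)).map (algebraMap K A) := by
      rw [hsqK]
    rw [Matrix.map_mul] at this
    rw [this]
    ext i j
    simp only [Matrix.map_apply, Matrix.add_apply, Matrix.smul_apply, Matrix.one_apply]
    simp [hR₁def, Matrix.map_apply, Algebra.smul_def, apply_ite (algebraMap K A), smul_eq_mul]
  -- L₁ in terms of K₁
  have hL1 : L ⊗ₖ (1 : Matrix (Fin n) (Fin n) A) = hb • (1 : Matrix _ _ A) - c • K₁ := by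
    rw [hLK, my_sub_kronecker, smul_kronecker, smul_kronecker, one_kronecker_one]
  have hE : R₁ * (hb • (1:Matrix _ _ A) - c • K₁) * R₁ * (hb • (1:Matrix _ _ A) - c • K₁)
      = (hb • (1:Matrix _ _ A) - c • K₁) * R₁ * (hb • (1:Matrix _ _ A) - c • K₁) * R₁ := by
    rw [← hL1]; exact hRE
  have hD : (c * c) • (R₁ * K₁ * R₁ * K₁ - K₁ * R₁ * K₁ * R₁)
      = (hb * c) • (R₁ * R₁ * K₁ - K₁ * (R₁ * R₁)) := by
    simp only [mul_sub, sub_mul, smul_mul_assoc, mul_smul_comm, smul_smul, mul_one, one_mul,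
      smul_sub, mul_assoc] at hE ⊢
    linear_combination (norm := module) hE
  have hcomm : R₁ * R₁ * K₁ - K₁ * (R₁ * R₁) = c • (R₁ * K₁ - K₁ * R₁) := by
    rw [hsq]
    simp only [add_mul, mul_add, smul_mul_assoc, mul_smul_comm, one_mul, mul_one, smul_sub]
    abel
  rw [hcomm, smul_smul] at hD
  have hcc : (c * c) ≠ 0 := mul_ne_zero hc hc
  have h2 := congrArg (fun M => (c * c)⁻¹ • M) hD
  simp only [smul_smul] at h2
  rw [inv_mul_cancel₀ hcc, one_smul] at h2
  rw [h2]
  congr 1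
  field_simp
end

section
/- Let A be an associative algebra containing matrices M (invertible) and K satisfying: R M₁ R M₁ = M₁ R M₁ R, R K₁ R K₁ − K₁ R K₁ R = ħ(R K₁ − K₁ R), and R K₁ R M₁ = M₁ R K₁ R⁻¹ + R M₁ (with ħ = 1). Then D := M⁻¹ K satisfies R⁻¹ D₁ R⁻¹ D₁ = D₁ R⁻¹ D₁ R⁻¹. -/
open Matrix
open scoped Kronecker

lemma kron_one_mul' {A : Type*} [Ring A] {n : ℕ} (X Y : Matrix (Fin n) (Fin n) A) :
    (X ⊗ₖ (1 : Matrix (Fin n) (Fin n) A)) * (Y ⊗ₖ (1 : Matrix (Fin n) (Fin n) A))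
      = (X * Y) ⊗ₖ (1 : Matrix (Fin n) (Fin n) A) := by
  ext ⟨i, j⟩ ⟨k, l⟩
  simp [Matrix.mul_apply, Matrix.one_apply, Fintype.sum_prod_type, ite_and, mul_ite, ite_mul,
    Finset.sum_ite_eq, Finset.sum_ite_eq']

lemma RE_core {B : Type*} [Ring B] (r s m u k : B)
    (hrs : r * s = 1) (hsr : s * r = 1) (hmu : m * u = 1) (hum : u * m = 1)
    (hRE : r * m * r * m = m * r * m * r)
    (hmRE : r * k * r * k - k * r * k * r = r * k - k * r)
    (hmix : r * k * r * m = m * r * k * s + r * m) :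
    s * (u * k) * s * (u * k) = (u * k) * s * (u * k) * s := by
  have h1 : u * r * k * r = r * k * s * u + u * r := by
    calc u * r * k * r = u * (r * k * r * m) * u := by
          rw [show u * (r * k * r * m) * u = u * r * k * r * (m * u) by noncomm_ring, hmu,
            mul_one]
      _ = u * (m * r * k * s + r * m) * u := by rw [hmix]
      _ = (u * m) * (r * k * s * u) + u * r * (m * u) := by noncomm_ring
      _ = r * k * s * u + u * r := by rw [hum, hmu, one_mul, mul_one]
  have star : k * s * u = s * u * r * k * r - s * u * r := by
    have h2 : s * (u * r * k * r) = s * (r * k * s * u + u * r) := by rw [h1]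
    rw [show s * (r * k * s * u + u * r) = (s * r) * (k * s * u) + s * u * r by noncomm_ring,
      hsr, one_mul, show s * (u * r * k * r) = s * u * r * k * r by noncomm_ring] at h2
    exact eq_sub_of_add_eq h2.symm
  have hEdiff : r * k * r * k - r * k = k * r * k * r - k * r :=
    sub_eq_sub_iff_sub_eq_sub.mp hmRE
  have hE : r * (r * k * r * k - r * k) = (r * k * r * k - r * k) * r := by
    conv_lhs => rw [hEdiff]
    noncomm_ring
  have hEs : s * (r * k * r * k - r * k) = (r * k * r * k - r * k) * s := by
    calc s * (r * k * r * k - r * k)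
        = s * (r * k * r * k - r * k) * (r * s) := by rw [hrs, mul_one]
      _ = s * ((r * k * r * k - r * k) * r) * s := by noncomm_ring
      _ = s * (r * (r * k * r * k - r * k)) * s := by rw [← hE]
      _ = (s * r) * ((r * k * r * k - r * k) * s) := by noncomm_ring
      _ = (r * k * r * k - r * k) * s := by rw [hsr, one_mul]
  have l1 : (m * r * m * r) * (s * u * s * u) = 1 := by
    calc (m * r * m * r) * (s * u * s * u)
        = m * r * m * (r * s) * (u * s * u) := by noncomm_ring
      _ = m * r * (m * u) * (s * u) := by rw [hrs, mul_one]; noncomm_ring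
      _ = m * (r * s) * u := by rw [hmu, mul_one]; noncomm_ring
      _ = 1 := by rw [hrs, mul_one, hmu]
  have l2 : (u * s * u * s) * (r * m * r * m) = 1 := by
    calc (u * s * u * s) * (r * m * r * m)
        = u * s * u * (s * r) * (m * r * m) := by noncomm_ring
      _ = u * s * (u * m) * (r * m) := by rw [hsr, mul_one]; noncomm_ring
      _ = u * (s * r) * m := by rw [hum, mul_one]; noncomm_ring
      _ = 1 := by rw [hsr, mul_one, hum]
  have hQ : u * s * u * s = s * u * s * u := by
    calc u * s * u * s = (u * s * u * s) * ((m * r * m * r) * (s * u * s * u)) := by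
          rw [l1, mul_one]
      _ = ((u * s * u * s) * (r * m * r * m)) * (s * u * s * u) := by
          rw [← hRE]; noncomm_ring
      _ = s * u * s * u := by rw [l2, one_mul]
  calc s * (u * k) * s * (u * k)
      = s * u * (k * s * u) * k := by noncomm_ring
    _ = s * u * (s * u * r * k * r - s * u * r) * k := by rw [star]
    _ = (s * u * s * u) * (r * k * r * k - r * k) := by noncomm_ring
    _ = (u * s * u * s) * (r * k * r * k - r * k) := by rw [hQ]
    _ = (u * s * u) * (s * (r * k * r * k - r * k)) := by noncomm_ring
    _ = (u * s * u) * ((r * k * r * k - r * k) * s) := by rw [hEs]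
    _ = u * (s * u * r * k * r - s * u * r) * (k * s) := by noncomm_ring
    _ = u * (k * s * u) * (k * s) := by rw [star]
    _ = (u * k) * s * (u * k) * s := by noncomm_ring

/-- If `M` (invertible) satisfies the reflection equation, `K` the modified reflection
equation with `ħ = 1`, and the mixed relation `R K₁ R M₁ = M₁ R K₁ R⁻¹ + R M₁` holds,
then `D = M⁻¹ K` satisfies `R⁻¹ D₁ R⁻¹ D₁ = D₁ R⁻¹ D₁ R⁻¹`. -/
theorem braided_derivatives_RE {K : Type*} [Field K] {A : Type*} [Ring A] [Algebra K A]
    {n : ℕ} (R Rinv : Matrix (Fin n × Fin n) (Fin n × Fin n) K)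
    (hRR : R * Rinv = 1) (hRR' : Rinv * R = 1)
    (M Kmat : Matrix (Fin n) (Fin n) A) (hM : IsUnit M)
    (hRE : letI R₁ := R.map (algebraMap K A)
           letI M₁ := M ⊗ₖ (1 : Matrix (Fin n) (Fin n) A)
           R₁ * M₁ * R₁ * M₁ = M₁ * R₁ * M₁ * R₁)
    (hmRE : letI R₁ := R.map (algebraMap K A)
            letI K₁ := Kmat ⊗ₖ (1 : Matrix (Fin n) (Fin n) A)
            R₁ * K₁ * R₁ * K₁ - K₁ * R₁ * K₁ * R₁ = R₁ * K₁ - K₁ * R₁)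
    (hmix : letI R₁ := R.map (algebraMap K A)
            letI S₁ := Rinv.map (algebraMap K A)
            letI M₁ := M ⊗ₖ (1 : Matrix (Fin n) (Fin n) A)
            letI K₁ := Kmat ⊗ₖ (1 : Matrix (Fin n) (Fin n) A)
            R₁ * K₁ * R₁ * M₁ = M₁ * R₁ * K₁ * S₁ + R₁ * M₁) :
    letI S₁ := Rinv.map (algebraMap K A)
    letI D := hM.unit⁻¹.val * Kmat
    letI D₁ := D ⊗ₖ (1 : Matrix (Fin n) (Fin n) A)
    S₁ * D₁ * S₁ * D₁ = D₁ * S₁ * D₁ * S₁ := by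
  have hMinv : M * hM.unit⁻¹.val = 1 := hM.mul_val_inv
  have hinvM : hM.unit⁻¹.val * M = 1 := hM.val_inv_mul
  have hrs : R.map (algebraMap K A) * Rinv.map (algebraMap K A) = 1 := by
    rw [← Matrix.map_mul, hRR, Matrix.map_one _ (map_zero _) (map_one _)]
  have hsr : Rinv.map (algebraMap K A) * R.map (algebraMap K A) = 1 := by
    rw [← Matrix.map_mul, hRR', Matrix.map_one _ (map_zero _) (map_one _)]
  have hmu : (M ⊗ₖ (1 : Matrix (Fin n) (Fin n) A)) *
      (hM.unit⁻¹.val ⊗ₖ (1 : Matrix (Fin n) (Fin n) A)) = 1 := by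
    rw [kron_one_mul', hMinv, Matrix.one_kronecker_one]
  have hum : (hM.unit⁻¹.val ⊗ₖ (1 : Matrix (Fin n) (Fin n) A)) *
      (M ⊗ₖ (1 : Matrix (Fin n) (Fin n) A)) = 1 := by
    rw [kron_one_mul', hinvM, Matrix.one_kronecker_one]
  show Rinv.map (algebraMap K A) * ((hM.unit⁻¹.val * Kmat) ⊗ₖ (1 : Matrix (Fin n) (Fin n) A)) *
      Rinv.map (algebraMap K A) * ((hM.unit⁻¹.val * Kmat) ⊗ₖ (1 : Matrix (Fin n) (Fin n) A)) =
    ((hM.unit⁻¹.val * Kmat) ⊗ₖ (1 : Matrix (Fin n) (Fin n) A)) * Rinv.map (algebraMap K A) *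
      ((hM.unit⁻¹.val * Kmat) ⊗ₖ (1 : Matrix (Fin n) (Fin n) A)) * Rinv.map (algebraMap K A)
  rw [← kron_one_mul']
  exact RE_core (R.map (algebraMap K A)) (Rinv.map (algebraMap K A))
    (M ⊗ₖ 1) (hM.unit⁻¹.val ⊗ₖ 1) (Kmat ⊗ₖ 1) hrs hsr hmu hum hRE hmRE hmix
end

section
/- Under the hypotheses of the previous statement (M invertible, the reflection-equation relation for M, the modified reflection-equation relation for K with ħ = 1, and the mixed relation R K₁ R M₁ = M₁ R K₁ R⁻¹ + R M₁), the matrix D = M⁻¹ K satisfies D₁ R M₁ R = R M₁ R⁻¹ D₁ + R. -/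
open Matrix
open scoped Kronecker

lemma aux_braided {B : Type*} [Ring B] (r s m mi k : B)
    (hrs : r * s = 1) (hsr : s * r = 1) (hmi : mi * m = 1) (him : m * mi = 1)
    (hre : r * m * r * m = m * r * m * r)
    (hmx : r * k * r * m = m * r * k * s + r * m) :
    mi * k * r * m * r = r * m * s * (mi * k) + r := by
  have hrs' : ∀ x : B, r * (s * x) = x := fun x => by rw [← mul_assoc, hrs, one_mul]
  have hsr' : ∀ x : B, s * (r * x) = x := fun x => by rw [← mul_assoc, hsr, one_mul]
  have hmi' : ∀ x : B, mi * (m * x) = x := fun x => by rw [← mul_assoc, hmi, one_mul]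
  have him' : ∀ x : B, m * (mi * x) = x := fun x => by rw [← mul_assoc, him, one_mul]
  have hre' : ∀ x : B, r * (m * (r * (m * x))) = m * (r * (m * (r * x))) := fun x => by
    have := congrArg (· * x) hre
    simpa [mul_assoc] using this
  have h1 : ∀ x : B, m * (r * (m * (s * x))) = s * (m * (r * (m * x))) := fun x => by
    have h := congrArg (fun y => s * y) (hre' (s * x))
    simp only [hsr', hrs'] at h
    exact h
  have step1 : k * (r * (m * r)) = s * (m * (r * k)) + m * r := by
    have h := congrArg (fun y => s * (y * r)) hmx
    simp only [add_mul, mul_add, mul_assoc, hsr, mul_one] at h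
    rw [hsr', hsr'] at h
    simpa [mul_assoc] using h
  calc mi * k * r * m * r = mi * (k * (r * (m * r))) := by simp [mul_assoc]
    _ = mi * (s * (m * (r * k))) + mi * (m * r) := by rw [step1, mul_add]
    _ = mi * (s * (m * (r * (m * (mi * k))))) + r := by rw [him' k, hmi']
    _ = mi * (m * (r * (m * (s * (mi * k))))) + r := by rw [h1]
    _ = r * m * s * (mi * k) + r := by rw [hmi']; simp [mul_assoc]

/-- Under the same hypotheses as for statement 2, the matrix `D = M⁻¹ K` satisfies
`D₁ R M₁ R = R M₁ R⁻¹ D₁ + R`. -/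
theorem braided_derivatives_mixed {K : Type*} [Field K] {A : Type*} [Ring A] [Algebra K A]
    {n : ℕ} (R Rinv : Matrix (Fin n × Fin n) (Fin n × Fin n) K)
    (hRR : R * Rinv = 1) (hRR' : Rinv * R = 1)
    (M Kmat : Matrix (Fin n) (Fin n) A) (hM : IsUnit M)
    (hRE : letI R₁ := R.map (algebraMap K A)
           letI M₁ := M ⊗ₖ (1 : Matrix (Fin n) (Fin n) A)
           R₁ * M₁ * R₁ * M₁ = M₁ * R₁ * M₁ * R₁)
    (hmRE : letI R₁ := R.map (algebraMap K A)
            letI K₁ := Kmat ⊗ₖ (1 : Matrix (Fin n) (Fin n) A)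
            R₁ * K₁ * R₁ * K₁ - K₁ * R₁ * K₁ * R₁ = R₁ * K₁ - K₁ * R₁)
    (hmix : letI R₁ := R.map (algebraMap K A)
            letI S₁ := Rinv.map (algebraMap K A)
            letI M₁ := M ⊗ₖ (1 : Matrix (Fin n) (Fin n) A)
            letI K₁ := Kmat ⊗ₖ (1 : Matrix (Fin n) (Fin n) A)
            R₁ * K₁ * R₁ * M₁ = M₁ * R₁ * K₁ * S₁ + R₁ * M₁) :
    letI R₁ := R.map (algebraMap K A)
    letI S₁ := Rinv.map (algebraMap K A)
    letI M₁ := M ⊗ₖ (1 : Matrix (Fin n) (Fin n) A)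
    letI D := hM.unit⁻¹.val * Kmat
    letI D₁ := D ⊗ₖ (1 : Matrix (Fin n) (Fin n) A)
    D₁ * R₁ * M₁ * R₁ = R₁ * M₁ * S₁ * D₁ + R₁ := by
  have hkron : ∀ X Y : Matrix (Fin n) (Fin n) A,
      (X * Y) ⊗ₖ (1 : Matrix (Fin n) (Fin n) A)
        = (X ⊗ₖ (1 : Matrix (Fin n) (Fin n) A)) * (Y ⊗ₖ (1 : Matrix (Fin n) (Fin n) A)) := by
    intro X Y
    ext ⟨i, j⟩ ⟨k, l⟩
    simp [Matrix.mul_apply, Matrix.one_apply, Fintype.sum_prod_type, mul_ite, ite_mul,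
      Finset.mul_sum, Finset.sum_ite_eq, Finset.sum_ite_eq']
  have hrs : R.map (algebraMap K A) * Rinv.map (algebraMap K A) = 1 := by
    rw [← Matrix.map_mul, hRR, Matrix.map_one _ (map_zero _) (map_one _)]
  have hsr : Rinv.map (algebraMap K A) * R.map (algebraMap K A) = 1 := by
    rw [← Matrix.map_mul, hRR', Matrix.map_one _ (map_zero _) (map_one _)]
  have hmi : (hM.unit⁻¹.val ⊗ₖ (1 : Matrix (Fin n) (Fin n) A))
      * (M ⊗ₖ (1 : Matrix (Fin n) (Fin n) A)) = 1 := by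
    rw [← hkron, hM.val_inv_mul, Matrix.one_kronecker_one]
  have him : (M ⊗ₖ (1 : Matrix (Fin n) (Fin n) A))
      * (hM.unit⁻¹.val ⊗ₖ (1 : Matrix (Fin n) (Fin n) A)) = 1 := by
    rw [← hkron, hM.mul_val_inv, Matrix.one_kronecker_one]
  have := aux_braided (R.map (algebraMap K A)) (Rinv.map (algebraMap K A))
    (M ⊗ₖ (1 : Matrix (Fin n) (Fin n) A)) (hM.unit⁻¹.val ⊗ₖ (1 : Matrix (Fin n) (Fin n) A))
    (Kmat ⊗ₖ (1 : Matrix (Fin n) (Fin n) A)) hrs hsr hmi him hRE hmix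
  rw [hkron]
  exact this
end

section
/- Let A be an associative ℂ-algebra with central t and elements x, y, z satisfying [x,y] = ħz, [y,z] = ħx, [z,x] = ħy. Let N be the 2×2 matrix over A with rows (t − iz, −ix − y) and (−ix + y, t + iz). Then N satisfies the Cayley–Hamilton identity N² − (2t + ħ)N + (t² + x² + y² + z² + ħt)·I = 0. -/
set_option maxHeartbeats 2000000 in
/-- The generating matrix `N` of `U(u(2)_ħ)` satisfies the Cayley–Hamilton identity
`N² − (2t + ħ)N + (t² + x² + y² + z² + ħt)·I = 0`. -/
theorem cayley_hamilton_u2 {A : Type*} [Ring A] [Algebra ℂ A] (hb : ℂ) (t x y z : A)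
    (htx : t * x = x * t) (hty : t * y = y * t) (htz : t * z = z * t)
    (hxy : x * y - y * x = hb • z) (hyz : y * z - z * y = hb • x)
    (hzx : z * x - x * z = hb • y) :
    letI i : A := algebraMap ℂ A Complex.I
    letI N : Matrix (Fin 2) (Fin 2) A :=
      !![t - i * z, -(i * x) - y; -(i * x) + y, t + i * z]
    N * N - (2 • t + algebraMap ℂ A hb) • N +
      (t ^ 2 + x ^ 2 + y ^ 2 + z ^ 2 + hb • t) • (1 : Matrix (Fin 2) (Fin 2) A) = 0 := by
  show _ = (0 : Matrix (Fin 2) (Fin 2) A)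
  obtain ⟨i, hi⟩ : ∃ i : A, i = algebraMap ℂ A Complex.I := ⟨_, rfl⟩
  obtain ⟨c, hc⟩ : ∃ c : A, c = algebraMap ℂ A hb := ⟨_, rfl⟩
  have hii : i * i = -1 := by
    rw [hi, ← map_mul, Complex.I_mul_I, map_neg, map_one]
  have hix : i * x = x * i := hi ▸ Algebra.commutes _ _
  have hiy : i * y = y * i := hi ▸ Algebra.commutes _ _
  have hiz : i * z = z * i := hi ▸ Algebra.commutes _ _
  have hit : i * t = t * i := hi ▸ Algebra.commutes _ _
  have hcx : c * x = x * c := hc ▸ Algebra.commutes _ _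
  have hcy : c * y = y * c := hc ▸ Algebra.commutes _ _
  have hcz : c * z = z * c := hc ▸ Algebra.commutes _ _
  have hct : c * t = t * c := hc ▸ Algebra.commutes _ _
  have hci : c * i = i * c := hc ▸ hi ▸ Algebra.commutes _ _
  have hs : ∀ a : A, hb • a = c * a := fun a => hc ▸ Algebra.smul_def _ _
  have h1 : y * x = x * y - c * z := by rw [← hs, ← hxy]; abel
  have h2 : z * y = y * z - c * x := by rw [← hs, ← hyz]; abel
  have h3 : x * z = z * x - c * y := by rw [← hs, ← hzx]; abel
  have hcomm : ∀ a : A, i * a = a * i := fun a => hi ▸ Algebra.commutes _ _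
  have hiai : ∀ a : A, i * (a * i) = -a := fun a => by
    rw [← mul_assoc, hcomm a, mul_assoc, hii, mul_neg_one]
  have hzt : z * (t * i) = t * (z * i) := by rw [← mul_assoc, ← htz, mul_assoc]
  have hxt : x * (t * i) = t * (x * i) := by rw [← mul_assoc, ← htx, mul_assoc]
  have hyt : y * (t * i) = t * (y * i) := by rw [← mul_assoc, ← hty, mul_assoc]
  have hyx : y * (x * i) = x * (y * i) - c * (z * i) := by
    rw [← mul_assoc, h1, sub_mul, mul_assoc, mul_assoc]
  have hzy : z * (y * i) = y * (z * i) - c * (x * i) := by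
    rw [← mul_assoc, h2, sub_mul, mul_assoc, mul_assoc]
  have hxz : x * (z * i) = z * (x * i) - c * (y * i) := by
    rw [← mul_assoc, h3, sub_mul, mul_assoc, mul_assoc]
  ext j k
  fin_cases j <;> fin_cases k <;>
    simp only [Matrix.mul_apply, Fin.sum_univ_two, Matrix.smul_apply, Matrix.add_apply,
      Matrix.sub_apply, Matrix.one_apply, Matrix.zero_apply, Matrix.of_apply,
      Matrix.cons_val', Matrix.cons_val_zero, Matrix.cons_val_one, Matrix.head_cons,
      Matrix.head_fin_const, Matrix.empty_val', Matrix.cons_val_fin_one,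
      smul_eq_mul, Fin.mk_zero, Fin.mk_one, one_ne_zero, zero_ne_one, reduceCtorEq,
      if_true, if_false, ite_true, ite_false, reduceIte, ← hi, ← hc, hs, two_smul] <;>
    noncomm_ring [h1, h2, h3, htx, hty, htz, hii, hix, hiy, hiz, hit, hcx, hcy, hcz, hct, hci,
      hiai, hzt, hxt, hyt, hyx, hzy, hxz]
end

section
/- Let s, ħ be independent variables over ℚ, set λ₀ = (ħ² − s²)/4, λ₊ = (ħ² − (s + 2ħ)²)/4, λ₋ = (ħ² − (s − 2ħ)²)/4, and Cas = (ħ² − s²)/4. Then the 4×4 matrix Π with rows (Cas − 3ħ²/2, ħ²/2, −2ħ, 0), (3ħ²/2, Cas − ħ²/2, 2ħ, 0), (ħ·Cas, 0, Cas − ħ²/2, −ħ), (ħ²·Cas, −(ħ²/2)·Cas, ħ(2Cas + ħ²/4), Cas + ħ²/2) has characteristic polynomial (λ − λ₀)²(λ − λ₊)(λ − λ₋). -/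
open MvPolynomial
set_option maxHeartbeats 2000000

lemma my_det_fin_four {R : Type*} [CommRing R] (M : Matrix (Fin 4) (Fin 4) R) :
    M.det = M 0 0*M 1 1*M 2 2*M 3 3 - M 0 0*M 1 1*M 2 3*M 3 2 - M 0 0*M 1 2*M 2 1*M 3 3 + M 0 0*M 1 2*M 2 3*M 3 1 + M 0 0*M 1 3*M 2 1*M 3 2 - M 0 0*M 1 3*M 2 2*M 3 1 - M 0 1*M 1 0*M 2 2*M 3 3 + M 0 1*M 1 0*M 2 3*M 3 2 + M 0 1*M 1 2*M 2 0*M 3 3 - M 0 1*M 1 2*M 2 3*M 3 0 - M 0 1*M 1 3*M 2 0*M 3 2 + M 0 1*M 1 3*M 2 2*M 3 0 + M 0 2*M 1 0*M 2 1*M 3 3 - M 0 2*M 1 0*M 2 3*M 3 1 - M 0 2*M 1 1*M 2 0*M 3 3 + M 0 2*M 1 1*M 2 3*M 3 0 + M 0 2*M 1 3*M 2 0*M 3 1 - M 0 2*M 1 3*M 2 1*M 3 0 - M 0 3*M 1 0*M 2 1*M 3 2 + M 0 3*M 1 0*M 2 2*M 3 1 + M 0 3*M 1 1*M 2 0*M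 3 2 - M 0 3*M 1 1*M 2 2*M 3 0 - M 0 3*M 1 2*M 2 0*M 3 1 + M 0 3*M 1 2*M 2 1*M 3 0 := by
  simp [Matrix.det_succ_row_zero, Fin.sum_univ_succ, Fin.succAbove,
    show (Fin.succ 2 : Fin 4) = 3 from rfl, show (Fin.castSucc 2 : Fin 4) = 2 from rfl,
    show ((1:Fin 4) < 3) from by decide]
  ring

/-- The matrix `Π` governing the permutation of the operators `Δᵢ` with the Casimir element
has characteristic polynomial `(λ − λ₀)²(λ − λ₊)(λ − λ₋)`, where
`λ₀ = (ħ² − s²)/4`, `λ± = (ħ² − (s ± 2ħ)²)/4` and `Cas = (ħ² − s²)/4`. -/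
theorem Pi_charpoly :
    letI R := MvPolynomial (Fin 2) ℚ
    letI s : R := MvPolynomial.X 0
    letI h : R := MvPolynomial.X 1
    letI Cas : R := MvPolynomial.C (1/4 : ℚ) * (h^2 - s^2)
    letI l0 : R := MvPolynomial.C (1/4 : ℚ) * (h^2 - s^2)
    letI lp : R := MvPolynomial.C (1/4 : ℚ) * (h^2 - (s + 2*h)^2)
    letI lm : R := MvPolynomial.C (1/4 : ℚ) * (h^2 - (s - 2*h)^2)
    letI Pim : Matrix (Fin 4) (Fin 4) R :=
      !![Cas - MvPolynomial.C (3/2 : ℚ) * h^2, MvPolynomial.C (1/2 : ℚ) * h^2, -(2*h), 0;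
         MvPolynomial.C (3/2 : ℚ) * h^2, Cas - MvPolynomial.C (1/2 : ℚ) * h^2, 2*h, 0;
         h * Cas, 0, Cas - MvPolynomial.C (1/2 : ℚ) * h^2, -h;
         h^2 * Cas, -(MvPolynomial.C (1/2 : ℚ) * h^2 * Cas), h * (2*Cas + MvPolynomial.C (1/4 : ℚ) * h^2),
           Cas + MvPolynomial.C (1/2 : ℚ) * h^2]
    Pim.charpoly = (Polynomial.X - Polynomial.C l0)^2 * (Polynomial.X - Polynomial.C lp) *
      (Polynomial.X - Polynomial.C lm) := by

  rw [Matrix.charpoly, my_det_fin_four]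
  simp only [Matrix.charmatrix_apply, Matrix.diagonal_apply, Matrix.of_apply,
    Matrix.cons_val', Matrix.cons_val_zero, Matrix.cons_val_one, Matrix.head_cons,
    Matrix.head_fin_const, Matrix.empty_val', Matrix.cons_val_fin_one,
    Matrix.cons_val_two, Matrix.cons_val_three, Matrix.tail_cons,
    Fin.reduceEq, reduceIte, reduceCtorEq, map_zero]
  apply Polynomial.funext; intro r
  apply MvPolynomial.funext; intro x
  simp only [Polynomial.eval_mul, Polynomial.eval_add, Polynomial.eval_sub, Polynomial.eval_pow,
    Polynomial.eval_neg, Polynomial.eval_X, Polynomial.eval_C, Polynomial.eval_ofNat, Polynomial.eval_zero, Polynomial.eval_one, map_zero, map_one,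
    map_mul, map_add, map_sub, map_pow, map_neg, map_ofNat, MvPolynomial.eval_X,
    MvPolynomial.eval_C]
  ring
end

section
/- With Π, λ₀, λ₊, λ₋ as above (entries in ℚ[s, ħ] with Cas = (ħ² − s²)/4), Π satisfies the annihilating polynomial (Π − λ₀I)(Π − λ₊I)(Π − λ₋I) = 0; in particular Π is semisimple with eigenvalues λ₀ (multiplicity two), λ₊, λ₋ whenever these are distinct. -/
open MvPolynomial

set_option maxHeartbeats 1000000 in
private lemma Pi_aux {R : Type*} [CommRing R] (s h t : R) (ht : 4 * t = 1) :
    letI Cas : R := t * (h^2 - s^2)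
    letI l0 : R := t * (h^2 - s^2)
    letI lp : R := t * (h^2 - (s + 2*h)^2)
    letI lm : R := t * (h^2 - (s - 2*h)^2)
    letI Pim : Matrix (Fin 4) (Fin 4) R :=
      !![Cas - 6 * t * h^2, 2 * t * h^2, -(2*h), 0;
         6 * t * h^2, Cas - 2 * t * h^2, 2*h, 0;
         h * Cas, 0, Cas - 2 * t * h^2, -h;
         h^2 * Cas, -(2 * t * h^2 * Cas),
           h * (2*Cas + t * h^2), Cas + 2 * t * h^2]
    (Pim - l0 • 1) * (Pim - lp • 1) * (Pim - lm • 1) = 0 := by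
  ext i j
  fin_cases i <;> fin_cases j <;>
    simp [Matrix.mul_apply, Fin.sum_univ_four, Matrix.one_apply]
  · linear_combination ((-2:R)*h^6*t + (-24:R)*h^6*t^2 + (2:R)*s^2*h^4*t + (24:R)*s^2*h^4*t^2) * ht
  · linear_combination ((8:R)*h^6*t^2 + (-8:R)*s^2*h^4*t^2) * ht
  · linear_combination ((-10:R)*h^5*t + (8:R)*s^2*h^3*t) * ht
  · ring
  · linear_combination ((2:R)*h^6*t + (24:R)*h^6*t^2 + (-2:R)*s^2*h^4*t + (-24:R)*s^2*h^4*t^2) * ht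
  · linear_combination ((-8:R)*h^6*t^2 + (8:R)*s^2*h^4*t^2) * ht
  · linear_combination ((10:R)*h^5*t + (-8:R)*s^2*h^3*t) * ht
  · ring
  · linear_combination ((7:R)*h^7*t^2 + (-11:R)*s^2*h^5*t^2 + (4:R)*s^4*h^3*t^2) * ht
  · linear_combination ((2:R)*h^7*t^2 + (-2:R)*s^2*h^5*t^2) * ht
  · linear_combination ((-2:R)*h^6*t + (-2:R)*h^6*t^2 + (2:R)*s^2*h^4*t + (8:R)*s^2*h^4*t^2) * ht
  · linear_combination ((-5:R)*h^5*t + (4:R)*s^2*h^3*t) * ht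
  · linear_combination ((5:R)*h^8*t^2 + (-6:R)*h^8*t^3 + (-9:R)*s^2*h^6*t^2 + (6:R)*s^2*h^6*t^3 + (4:R)*s^4*h^4*t^2) * ht
  · linear_combination ((-16:R)*h^8*t^3 + (24:R)*s^2*h^6*t^3 + (-8:R)*s^4*h^4*t^3) * ht
  · linear_combination ((15:R)*h^7*t^2 + (-22:R)*s^2*h^5*t^2 + (8:R)*s^4*h^3*t^2) * ht
  · linear_combination ((-2:R)*h^6*t + (18:R)*h^6*t^2 + (2:R)*s^2*h^4*t + (-8:R)*s^2*h^4*t^2) * ht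

/-- The matrix `Π` satisfies the annihilating polynomial
`(Π − λ₀I)(Π − λ₊I)(Π − λ₋I) = 0` over `ℚ[s, ħ]`. -/
theorem Pi_annihilating_polynomial :
    letI R := MvPolynomial (Fin 2) ℚ
    letI s : R := MvPolynomial.X 0
    letI h : R := MvPolynomial.X 1
    letI Cas : R := MvPolynomial.C (1/4 : ℚ) * (h^2 - s^2)
    letI l0 : R := MvPolynomial.C (1/4 : ℚ) * (h^2 - s^2)
    letI lp : R := MvPolynomial.C (1/4 : ℚ) * (h^2 - (s + 2*h)^2)
    letI lm : R := MvPolynomial.C (1/4 : ℚ) * (h^2 - (s - 2*h)^2)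
    letI Pim : Matrix (Fin 4) (Fin 4) R :=
      !![Cas - MvPolynomial.C (3/2 : ℚ) * h^2, MvPolynomial.C (1/2 : ℚ) * h^2, -(2*h), 0;
         MvPolynomial.C (3/2 : ℚ) * h^2, Cas - MvPolynomial.C (1/2 : ℚ) * h^2, 2*h, 0;
         h * Cas, 0, Cas - MvPolynomial.C (1/2 : ℚ) * h^2, -h;
         h^2 * Cas, -(MvPolynomial.C (1/2 : ℚ) * h^2 * Cas),
           h * (2*Cas + MvPolynomial.C (1/4 : ℚ) * h^2), Cas + MvPolynomial.C (1/2 : ℚ) * h^2]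
    (Pim - l0 • 1) * (Pim - lp • 1) * (Pim - lm • 1) = 0 := by
  have e2 : (MvPolynomial.C (1/2 : ℚ) : MvPolynomial (Fin 2) ℚ)
      = 2 * MvPolynomial.C (1/4 : ℚ) := by
    rw [← map_ofNat (MvPolynomial.C : ℚ →+* MvPolynomial (Fin 2) ℚ) 2, ← map_mul]; norm_num
  have e3 : (MvPolynomial.C (3/2 : ℚ) : MvPolynomial (Fin 2) ℚ)
      = 6 * MvPolynomial.C (1/4 : ℚ) := by
    rw [← map_ofNat (MvPolynomial.C : ℚ →+* MvPolynomial (Fin 2) ℚ) 6, ← map_mul]; norm_num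
  have ht : 4 * (MvPolynomial.C (1/4 : ℚ) : MvPolynomial (Fin 2) ℚ) = 1 := by
    rw [← map_ofNat (MvPolynomial.C : ℚ →+* MvPolynomial (Fin 2) ℚ) 4, ← map_mul]; norm_num
  simp only [e2, e3]
  exact Pi_aux _ _ _ ht
end

section
/- Let f : ℝ → ℝ be a polynomial (or C³ function) and fix s ≠ 0. Define for ħ ≠ 0 the quantity E(ħ) = (1/ħ²)(2f(s²) − f((s − 2ħ)²) − f((s + 2ħ)²)) + (2/(s ħ))(f((s − 2ħ)²) − f((s + 2ħ)²)). Then E(ħ) tends to −16 s² f''(s²) − 24 f'(s²) as ħ → 0; equivalently, writing μ = s², the radial-part difference operator degenerates to the differential operator −16μ d²/dμ² − 24 d/dμ. -/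
open Filter Topology

/-!
Put `g ħ = f ((s + 2ħ)²)`. Then the quantity is
`-(g ħ + g (-ħ) - 2 g 0) / ħ² - (4 / s) (g ħ - g (-ħ)) / (2ħ)`.
The central difference quotient tends to `g' 0`, and the symmetric second difference quotient
tends to `g'' 0` by L'Hôpital, its derivative quotient being the central difference quotient
of `g'`. The chain rule gives `g' 0 = 4s f'(s²)` and `g'' 0 = 16s² f''(s²) + 8 f'(s²)`.
-/

theorem HasDerivAt.tendsto_central_difference_quotient {g : ℝ → ℝ} {c x : ℝ}
    (hg : HasDerivAt g c x) :
    Tendsto (fun h => (g (x + h) - g (x - h)) / (2 * h)) (𝓝[≠] 0) (𝓝 c) := by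
  have hplus : HasDerivAt (fun h => g (x + h)) c 0 := .comp_const_add x 0 (by simpa using hg)
  have hminus : HasDerivAt (fun h => g (x - h)) (-c) 0 := .comp_const_sub x 0 (by simpa using hg)
  have hslope := (hplus.sub hminus).tendsto_slope_zero.div_const 2
  rw [sub_neg_eq_add, add_self_div_two] at hslope
  refine hslope.congr fun h => ?_
  simp only [Pi.sub_apply, zero_add, add_zero, sub_zero, sub_self, smul_eq_mul]
  rw [mul_comm 2 h, ← div_div, inv_mul_eq_div]

theorem tendsto_symmetric_second_difference_quotient {g g' : ℝ → ℝ} {c x : ℝ}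
    (hg : ∀ᶠ y in 𝓝 x, HasDerivAt g (g' y) y) (hg' : HasDerivAt g' c x) :
    Tendsto (fun h => (g (x + h) + g (x - h) - 2 * g x) / h ^ 2) (𝓝[≠] 0) (𝓝 c) := by
  have hshift : ∀ᶠ h in 𝓝 (0 : ℝ), HasDerivAt g (g' (x + h)) (x + h) ∧
      HasDerivAt g (g' (x - h)) (x - h) := by
    have hplus : Tendsto (x + ·) (𝓝 0) (𝓝 x) := by
      simpa using (continuous_const_add x).tendsto 0
    have hminus : Tendsto (x - ·) (𝓝 0) (𝓝 x) := by
      simpa using (continuous_sub_left x).tendsto 0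
    exact (hplus.eventually hg).and (hminus.eventually hg)
  have hnum : ∀ᶠ h in 𝓝 (0 : ℝ), HasDerivAt (fun h => g (x + h) + g (x - h) - 2 * g x)
      (g' (x + h) - g' (x - h)) h := by
    filter_upwards [hshift] with h ⟨hp, hm⟩
    simpa [sub_eq_add_neg] using
      ((hp.comp_const_add x h).add (hm.comp_const_sub x h)).sub_const (2 * g x)
  have hnum0 : Tendsto (fun h => g (x + h) + g (x - h) - 2 * g x) (𝓝[≠] 0) (𝓝 0) := by
    have := hnum.self_of_nhds.continuousAt.tendsto.mono_left (nhdsWithin_le_nhds (s := {0}ᶜ))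
    convert this using 2
    simp only [add_zero, sub_zero]
    ring
  refine HasDerivAt.lhopital_zero_nhdsNE (nhdsWithin_le_nhds hnum)
    (Eventually.of_forall fun h => by simpa using hasDerivAt_pow 2 h) ?_ hnum0 ?_ ?_
  · filter_upwards [self_mem_nhdsWithin] with h hh using mul_ne_zero two_ne_zero hh
  · simpa using ((continuous_pow 2).tendsto' (0 : ℝ) 0 (by simp)).mono_left nhdsWithin_le_nhds
  · simpa [mul_comm] using hg'.tendsto_central_difference_quotient

theorem tendsto_radial_difference_quotient {g g' : ℝ → ℝ} {c : ℝ} (s : ℝ)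
    (hg : ∀ᶠ y in 𝓝 0, HasDerivAt g (g' y) y) (hg' : HasDerivAt g' c 0) :
    Tendsto (fun h => (1 / h ^ 2) * (2 * g 0 - g (-h) - g h) + (2 / (s * h)) * (g (-h) - g h))
      (𝓝[≠] 0) (𝓝 (-c - 4 / s * g' 0)) := by
  have hsecond := tendsto_symmetric_second_difference_quotient hg hg'
  have hcentral := hg.self_of_nhds.tendsto_central_difference_quotient
  refine (hsecond.neg.sub (hcentral.const_mul (4 / s))).congr' ?_
  filter_upwards [self_mem_nhdsWithin] with h hh
  simp only [zero_add, zero_sub]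
  field_simp
  ring

theorem hasDerivAt_add_mul_sq (s a h : ℝ) :
    HasDerivAt (fun t => (s + a * t) ^ 2) (2 * a * (s + a * h)) h :=
  (((hasDerivAt_id h).const_mul a).const_add s).pow 2 |>.congr_deriv (by simp; ring)

/-- The radial-part difference operator degenerates as `ħ → 0` to the differential
operator `−16μ d²/dμ² − 24 d/dμ` evaluated at `μ = s²`. -/
theorem radial_part_classical_limit (f : ℝ → ℝ) (hf : ContDiff ℝ 3 f) (s : ℝ) (hs : s ≠ 0) :
    Tendsto (fun hb : ℝ =>
        (1 / hb ^ 2) * (2 * f (s ^ 2) - f ((s - 2 * hb) ^ 2) - f ((s + 2 * hb) ^ 2)) +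
        (2 / (s * hb)) * (f ((s - 2 * hb) ^ 2) - f ((s + 2 * hb) ^ 2)))
      (𝓝[≠] 0)
      (𝓝 (-16 * s ^ 2 * deriv (deriv f) (s ^ 2) - 24 * deriv f (s ^ 2))) := by
  have hf' : Differentiable ℝ f := hf.differentiable (by norm_num)
  have hf'' : Differentiable ℝ (deriv f) := (hf.of_le (by norm_num)).differentiable_deriv_two
  set g : ℝ → ℝ := fun h => f ((s + 2 * h) ^ 2)
  set g' : ℝ → ℝ := fun h => deriv f ((s + 2 * h) ^ 2) * (2 * 2 * (s + 2 * h))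
  have hg (h : ℝ) : HasDerivAt g (g' h) h :=
    (hf' _).hasDerivAt.comp h (hasDerivAt_add_mul_sq s 2 h)
  have hg' : HasDerivAt g'
      (deriv (deriv f) (s ^ 2) * (2 * 2 * s) * (2 * 2 * s) + deriv f (s ^ 2) * (2 * 2 * 2)) 0 := by
    have hinner := (hf'' _).hasDerivAt.comp 0 (hasDerivAt_add_mul_sq s 2 0)
    have hlin := (((hasDerivAt_id (0 : ℝ)).const_mul 2).const_add s).const_mul (2 * 2)
    exact (hinner.mul hlin).congr_deriv (by simp)
  convert tendsto_radial_difference_quotient s (.of_forall hg) hg' using 2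
  · simp [g, sub_eq_add_neg]
  · simp only [g', mul_zero, add_zero]
    field_simp
    ring
end
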